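/- Fix s ≥ 1, P_s = {a_1,…,a_s, c | a_i < c}, with μ the Möbius function of P_s^*. For 1 ≤ m ≤ n: μ(a_1^m, c^n) + μ(a_1^{m−1}, c^{n−1}) = s·μ(a_1^m, c^{n−1}). -/

import Mathlib

/-- The alphabet `P_s = {a_1, …, a_s, c}` with `a_i < c`: `some i` is `a_i`, `none` is `c`. -/
abbrev Letter (s : ℕ) := Option (Fin s)

/-- The generalized subword order on words over `P_s`. -/
def WLE {s : ℕ} (u w : List (Letter s)) : Prop :=
  ∃ w', w'.Sublist w ∧ List.Forall₂ (fun x y => x = y ∨ y = none) u w'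

/-!
By its defining sums, `μ(a_1^m, ·)` is the unique `f` with `∑_{z ≤ w} f z = [w = a_1^m]` for all
words `w` (the down-sets `D(w)` are finite, and strictly smaller below `w`), so it suffices to build
such functions `f_m` explicitly. They are defined by recursion on the first letter of the word:
`f_m(a_j w) = [j = 1, m > 0] f_{m-1}(w) - [w does not begin with a_j] f_m(w)`, and `f_m(c w)` is
chosen so that `∑_x f_m(x w) = -[m = 0, w = ∅]`. Since `D(c w) = {∅} ∪ P_s D(w)` and
`D(a_j w) = D(w) ∪ a_j D(w)`, where the two parts overlap in the words of `D(w)` beginning with `a_j`,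
both down-set sums reduce to sums over `D(w)`. No `c^k` begins with an `a_j`, so the relation
defining `f_m(c^n)` is the recurrence.
-/

def LetterLE {s : ℕ} (x y : Letter s) : Prop := x = y ∨ y = none

instance {s : ℕ} : Std.Refl (LetterLE (s := s)) := ⟨fun _ => Or.inl rfl⟩

instance {s : ℕ} : IsTrans (Letter s) LetterLE :=
  ⟨fun _ _ _ hxy hyz => by rcases hyz with rfl | rfl <;> [exact hxy; exact Or.inr rfl]⟩

section Order

variable {s : ℕ} {u v w z : List (Letter s)}

theorem wle_iff_sublistForall₂ : WLE u w ↔ List.SublistForall₂ LetterLE u w := by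
  rw [List.sublistForall₂_iff, WLE]
  exact exists_congr fun _ => and_comm

theorem WLE.refl (w : List (Letter s)) : WLE w w :=
  wle_iff_sublistForall₂.2 (refl_of _ w)

theorem WLE.trans (huv : WLE u v) (hvw : WLE v w) : WLE u w := by
  rw [wle_iff_sublistForall₂] at *
  exact _root_.trans huv hvw

theorem WLE.length_le (h : WLE u w) : u.length ≤ w.length := by
  obtain ⟨w', hw', hu⟩ := h
  exact hu.length_eq.trans_le hw'.length_le

theorem WLE.antisymm (huw : WLE u w) (hwu : WLE w u) : u = w := by
  have hlen := le_antisymm huw.length_le hwu.length_le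
  obtain ⟨w', hw', hu⟩ := huw
  obtain ⟨u', hu', hw⟩ := hwu
  rw [hw'.eq_of_length (hu.length_eq.symm.trans hlen)] at hu
  rw [hu'.eq_of_length (hw.length_eq.symm.trans hlen.symm)] at hw
  clear hw' hu' hlen
  induction hu with
  | nil => rfl
  | cons hxy _ ih =>
    obtain _ | ⟨hyx, hw⟩ := hw
    rw [ih hw]
    rcases hxy with rfl | rfl
    exacts [rfl, congrArg (· :: _) (hyx.elim Eq.symm id)]

theorem nil_wle (w : List (Letter s)) : WLE [] w :=
  wle_iff_sublistForall₂.2 .nil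

theorem wle_nil_iff : WLE u [] ↔ u = [] :=
  ⟨fun h => List.eq_nil_of_length_eq_zero (Nat.le_zero.1 h.length_le), fun h => h ▸ .refl []⟩

theorem WLE.of_cons {x : Letter s} (h : WLE (x :: u) w) : WLE u w :=
  .trans (wle_iff_sublistForall₂.2 (List.sublist_cons_self x u).sublistForall₂) h

theorem wle_cons_iff {y : Letter s} :
    WLE z (y :: w) ↔ WLE z w ∨ ∃ x z', z = x :: z' ∧ LetterLE x y ∧ WLE z' w := by
  simp only [wle_iff_sublistForall₂]
  constructor
  · rintro (_ | ⟨hxy, h⟩ | h)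
    · exact Or.inl .nil
    · exact Or.inr ⟨_, _, rfl, hxy, h⟩
    · exact Or.inl h
  · rintro (h | ⟨x, z', rfl, hxy, h⟩)
    exacts [.cons_right h, .cons hxy h]

theorem wle_none_cons_iff :
    WLE z (none :: w) ↔ z = [] ∨ ∃ x z', z = x :: z' ∧ WLE z' w := by
  rw [wle_cons_iff]
  constructor
  · rintro (h | ⟨x, z', rfl, -, h⟩)
    · cases z with
      | nil => exact Or.inl rfl
      | cons x z' => exact Or.inr ⟨x, z', rfl, h.of_cons⟩
    · exact Or.inr ⟨x, z', rfl, h⟩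
  · rintro (rfl | ⟨x, z', rfl, h⟩)
    exacts [Or.inl (nil_wle w), Or.inr ⟨x, z', rfl, Or.inr rfl, h⟩]

theorem wle_some_cons_iff {j : Fin s} :
    WLE z (some j :: w) ↔ WLE z w ∨ ∃ z', z = some j :: z' ∧ WLE z' w := by
  rw [wle_cons_iff]
  refine or_congr_right ⟨?_, ?_⟩
  · rintro ⟨x, z', rfl, rfl | h, h'⟩
    exacts [⟨z', rfl, h'⟩, absurd h (Option.some_ne_none j)]
  · rintro ⟨z', rfl, h⟩
    exact ⟨_, z', rfl, Or.inl rfl, h⟩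

end Order

namespace SubwordMobius

variable {s : ℕ}

def downset : List (Letter s) → Finset (List (Letter s))
  | [] => {[]}
  | none :: w => insert [] ((downset w ×ˢ Finset.univ).image fun p => p.2 :: p.1)
  | some j :: w => downset w ∪ (downset w).image (some j :: ·)

theorem mem_downset {z w : List (Letter s)} : z ∈ downset w ↔ WLE z w := by
  induction w generalizing z with
  | nil => simp [downset, wle_nil_iff]
  | cons y w ih =>
    cases y with
    | none =>
      simp only [downset, wle_none_cons_iff, Finset.mem_insert, Finset.mem_image,
        Finset.mem_product, Finset.mem_univ, and_true, ih, Prod.exists]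
      aesop
    | some j =>
      simp only [downset, wle_some_cons_iff, Finset.mem_union, Finset.mem_image, ih]
      aesop

theorem self_mem_downset (w : List (Letter s)) : w ∈ downset w :=
  mem_downset.2 (.refl w)

theorem downset_ssubset_downset {z w : List (Letter s)} (hzw : WLE z w) (hne : z ≠ w) :
    downset z ⊂ downset w :=
  (Finset.ssubset_iff_of_subset fun _ hy => mem_downset.2 ((mem_downset.1 hy).trans hzw)).2
    ⟨w, self_mem_downset w, fun h => hne (hzw.antisymm (mem_downset.1 h))⟩

theorem sum_downset_none_cons (w : List (Letter s)) (f : List (Letter s) → ℤ) :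
    ∑ z ∈ downset (none :: w), f z
      = f [] + ∑ z ∈ downset w, ∑ x : Letter s, f (x :: z) := by
  rw [downset, Finset.sum_insert (by simp), Finset.sum_image (by simp [Set.InjOn]),
    Finset.sum_product]

theorem sum_downset_some_cons (j : Fin s) (w : List (Letter s)) (f : List (Letter s) → ℤ) :
    ∑ z ∈ downset (some j :: w), f z = ∑ z ∈ downset w,
      (f z + f (some j :: z) - if z.head? = some (some j) then f z else 0) := by
  have hinter : downset w ∩ (downset w).image (some j :: ·) =
      (downset w).filter (·.head? = some (some j)) := by
    ext z
    simp only [Finset.mem_inter, Finset.mem_image, Finset.mem_filter, mem_downset]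
    refine and_congr_right fun hz => ⟨?_, fun hhead => ?_⟩
    · rintro ⟨z', -, rfl⟩
      rfl
    · obtain ⟨z', rfl⟩ : ∃ z', z = some j :: z' := by
        cases z <;> simp_all
      exact ⟨z', hz.of_cons, rfl⟩
  have hunion := Finset.sum_union_inter (f := f) (s₁ := downset w)
    (s₂ := (downset w).image (some j :: ·))
  rw [Finset.sum_image (by simp), hinter, Finset.sum_filter] at hunion
  rw [Finset.sum_sub_distrib, Finset.sum_add_distrib, downset]
  linarith

theorem eq_of_sum_downset_eq {f g : List (Letter s) → ℤ}
    (h : ∀ w, ∑ z ∈ downset w, f z = ∑ z ∈ downset w, g z) : f = g := by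
  funext w
  induction hcard : (downset w).card using Nat.strong_induction_on generalizing w with
  | _ n ih =>
    have hbelow : ∀ z ∈ (downset w).erase w, f z = g z := fun z hz => by
      obtain ⟨hzw, hz⟩ := Finset.mem_erase.1 hz
      have hlt := Finset.card_lt_card (downset_ssubset_downset (mem_downset.1 hz) hzw)
      exact ih _ (hcard ▸ hlt) z rfl
    have hw := h w
    rw [← Finset.sum_erase_add _ f (self_mem_downset w),
      ← Finset.sum_erase_add _ g (self_mem_downset w), Finset.sum_congr rfl hbelow] at hw
    exact add_left_cancel hw

theorem sum_downset_mobius (μ : List (Letter s) → List (Letter s) → ℤ)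
    (hrefl : ∀ u, μ u u = 1)
    (hnle : ∀ u v, ¬ WLE u v → μ u v = 0)
    (hsum : ∀ u v, WLE u v → u ≠ v →
      ∑ᶠ z ∈ {z : List (Letter s) | WLE u z ∧ WLE z v}, μ u z = 0)
    (u v : List (Letter s)) :
    ∑ z ∈ downset v, μ u z = if v = u then 1 else 0 := by
  classical
  rw [← Finset.sum_filter_of_ne (p := WLE u) fun z _ hz => by_contra (hz ∘ hnle u z)]
  by_cases huv : WLE u v
  · by_cases hvu : v = u
    · subst hvu
      have hsingle : (downset v).filter (WLE v) = {v} := by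
        ext z
        simp only [Finset.mem_filter, mem_downset, Finset.mem_singleton]
        exact ⟨fun h => h.1.antisymm h.2, by rintro rfl; exact ⟨.refl _, .refl _⟩⟩
      rw [hsingle, Finset.sum_singleton, hrefl, if_pos rfl]
    · have hinterval : {z | WLE u z ∧ WLE z v} = ↑((downset v).filter (WLE u)) := by
        ext z
        simp [mem_downset, and_comm]
      rw [if_neg hvu, ← finsum_mem_coe_finset, ← hinterval, hsum u v huv (Ne.symm hvu)]
  · rw [if_neg fun h : v = u => huv (h ▸ .refl v)]
    refine Finset.sum_eq_zero fun z hz => absurd ?_ huv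
    simp only [Finset.mem_filter, mem_downset] at hz
    exact hz.2.trans hz.1

def someConsValue (a j : Fin s) (w : List (Letter s)) (f : ℕ → ℤ) (m : ℕ) : ℤ :=
  (if j = a ∧ 0 < m then f (m - 1) else 0) - if w.head? = some (some j) then 0 else f m

/-- The Möbius value `μ(a^m, w)`. -/
def mobiusFromPow (a : Fin s) : ℕ → List (Letter s) → ℤ
  | m, [] => if m = 0 then 1 else 0
  | m, some j :: w => someConsValue a j w (mobiusFromPow a · w) m
  | m, none :: w =>
      -(if m = 0 ∧ w = [] then 1 else 0) - ∑ j, someConsValue a j w (mobiusFromPow a · w) m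

theorem sum_mobiusFromPow_cons (a : Fin s) (m : ℕ) (w : List (Letter s)) :
    ∑ x : Letter s, mobiusFromPow a m (x :: w) = -(if m = 0 ∧ w = [] then 1 else 0) := by
  rw [Fintype.sum_option]
  simp only [mobiusFromPow]
  ring

theorem mobiusFromPow_add_some_cons (a j : Fin s) (m : ℕ) (w : List (Letter s)) :
    mobiusFromPow a m w + mobiusFromPow a m (some j :: w)
        - (if w.head? = some (some j) then mobiusFromPow a m w else 0)
      = if j = a ∧ 0 < m then mobiusFromPow a (m - 1) w else 0 := by
  simp only [mobiusFromPow, someConsValue]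
  split_ifs <;> ring

theorem sum_downset_mobiusFromPow (a : Fin s) (w : List (Letter s)) (m : ℕ) :
    ∑ z ∈ downset w, mobiusFromPow a m z = if w = List.replicate m (some a) then 1 else 0 := by
  induction w generalizing m with
  | nil => simp [downset, mobiusFromPow]
  | cons x w ih =>
    cases x with
    | none =>
      rw [sum_downset_none_cons, Finset.sum_congr rfl fun z _ => sum_mobiusFromPow_cons a m z]
      cases m <;> simp [mobiusFromPow, mem_downset, nil_wle, List.replicate_succ]
    | some j =>
      rw [sum_downset_some_cons,
        Finset.sum_congr rfl fun z _ => mobiusFromPow_add_some_cons a j m z,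
        Finset.sum_ite_irrel, Finset.sum_const_zero, ih]
      cases m <;> simp [List.replicate_succ, ite_and]

theorem mobius_pow_eq_mobiusFromPow (μ : List (Letter s) → List (Letter s) → ℤ)
    (hrefl : ∀ u, μ u u = 1)
    (hnle : ∀ u v, ¬ WLE u v → μ u v = 0)
    (hsum : ∀ u v, WLE u v → u ≠ v →
      ∑ᶠ z ∈ {z : List (Letter s) | WLE u z ∧ WLE z v}, μ u z = 0)
    (a : Fin s) (m : ℕ) :
    μ (List.replicate m (some a)) = mobiusFromPow a m :=
  eq_of_sum_downset_eq fun w => by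
    rw [sum_downset_mobius μ hrefl hnle hsum, sum_downset_mobiusFromPow]

theorem mobiusFromPow_replicate_none (a : Fin s) (m n : ℕ) :
    mobiusFromPow a (m + 1) (List.replicate (n + 1) none)
        + mobiusFromPow a m (List.replicate n none)
      = s * mobiusFromPow a (m + 1) (List.replicate n none) := by
  have hhead : ∀ j : Fin s, (List.replicate n (none : Letter s)).head? ≠ some (some j) := by
    cases n <;> simp [List.replicate_succ]
  simp only [List.replicate_succ, mobiusFromPow, someConsValue, hhead]
  simp [Finset.sum_sub_distrib]

end SubwordMobius

/-- For `1 ≤ m ≤ n`: `μ(a_1^m, c^n) + μ(a_1^{m−1}, c^{n−1}) = s·μ(a_1^m, c^{n−1})`. -/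
theorem mu_a_recurrence (s : ℕ) (hs : 1 ≤ s)
    (μ : List (Letter s) → List (Letter s) → ℤ)
    (hrefl : ∀ u, μ u u = 1)
    (hnle : ∀ u v, ¬ WLE u v → μ u v = 0)
    (hsum : ∀ u v, WLE u v → u ≠ v → ∑ᶠ z ∈ {z : List (Letter s) | WLE u z ∧ WLE z v}, μ u z = 0)
    (m n : ℕ) (hm : 1 ≤ m) (hmn : m ≤ n) :
    μ (List.replicate m (some (⟨0, hs⟩ : Fin s) : Letter s)) (List.replicate n (none : Letter s)) +
      μ (List.replicate (m - 1) (some (⟨0, hs⟩ : Fin s) : Letter s))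
        (List.replicate (n - 1) (none : Letter s))
      = (s : ℤ) * μ (List.replicate m (some (⟨0, hs⟩ : Fin s) : Letter s))
          (List.replicate (n - 1) (none : Letter s)) := by
  obtain ⟨m, rfl⟩ : ∃ k, m = k + 1 := ⟨m - 1, by omega⟩
  obtain ⟨n, rfl⟩ : ∃ k, n = k + 1 := ⟨n - 1, by omega⟩
  simp only [Nat.add_sub_cancel, SubwordMobius.mobius_pow_eq_mobiusFromPow μ hrefl hnle hsum]
  exact SubwordMobius.mobiusFromPow_replicate_none _ m n
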